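/- If η is a real (1,1)-form on a quaternionic Hermitian vector space with -J(η) denoting the image of η under the extended J-action, then -J(η) has the same eigenvalues as η; consequently, if η is ω^q-positive then so are -J(η) and the anti-J-invariant part η′ = ½(η - J(η)). -/

import Mathlib

/-!
The substitution `F ↦ F(J·ȳ, J·x)` is compatible with wedge products and fixes `ω` because
`h(Jx, Jy) = h(y, x)`; so it fixes every power `ω^k`, maps weak positivity to weak positivity
(it is a change of the test vectors), and on the `(1,1)`-form `η` it is `-J(η)`. Hence
`η ∧ ω^{q-1} ↦ -J(η) ∧ ω^{q-1}` preserves positivity, and `η'` is the average of the two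
positive forms `η` and `-J(η)`. On a diagonalizing frame `e`, `J² = -1` gives
`-J(η)(Je_i, Je_j) = η(e_j, e_i)`, so `J ∘ e` diagonalizes `-J(η)` with the same eigenvalues.
-/

noncomputable section

open scoped BigOperators

abbrev Blk (V : Type*) (p q : ℕ) := (Fin p → V) → (Fin q → V) → ℂ

def wedgeBlk (V : Type*) (p₁ q₁ p₂ q₂ : ℕ) (f : Blk V p₁ q₁) (g : Blk V p₂ q₂) :
    Blk V (p₁ + p₂) (q₁ + q₂) := fun x y =>
  (((p₁.factorial * p₂.factorial * q₁.factorial * q₂.factorial : ℕ) : ℂ))⁻¹ *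
    ∑ σ : Equiv.Perm (Fin (p₁ + p₂)), ∑ τ : Equiv.Perm (Fin (q₁ + q₂)),
      ((Equiv.Perm.sign σ : ℤ) : ℂ) * ((Equiv.Perm.sign τ : ℤ) : ℂ) *
        f (fun i => x (σ (Fin.castAdd p₂ i))) (fun j => y (τ (Fin.castAdd q₂ j))) *
        g (fun i => x (σ (Fin.natAdd p₁ i))) (fun j => y (τ (Fin.natAdd q₁ j)))

def powBlk {V : Type*} (ω : Blk V 1 1) : (k : ℕ) → Blk V k k
  | 0 => fun _ _ => 1
  | k + 1 => fun x y =>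
      wedgeBlk V 1 1 k k ω (powBlk ω k)
        (fun i => x (Fin.cast (by omega) i)) (fun j => y (Fin.cast (by omega) j))

def WeakPos {V : Type*} (k : ℕ) (F : Blk V k k) : Prop :=
  ∀ x : Fin k → V,
    0 ≤ (Complex.I ^ k * F x x).re ∧ (Complex.I ^ k * F x x).im = 0

/-- The action of `J` on (block-encoded) `(1,1)`-forms. -/
def Jact {V : Type*} (J : V → V) (η : V → V → ℂ) : V → V → ℂ :=
  fun x y => -η (J y) (J x)

/-- `ω^q`-positivity of a `(1,1)`-form `η`: `η ∧ ω^{q-1}` is weakly positive. -/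
def OmegaQPos {V : Type*} (ω : Blk V 1 1) (q : ℕ) (η : V → V → ℂ) : Prop :=
  WeakPos (1 + (q - 1))
    (wedgeBlk V 1 1 (q - 1) (q - 1) (fun a b => η (a 0) (b 0)) (powBlk ω (q - 1)))

section JTranspose

variable {V : Type*}

def jTranspose (J : V → V) {p q : ℕ} (F : Blk V p q) : Blk V q p :=
  fun x y => F (fun i => J (y i)) (fun j => J (x j))

theorem jTranspose_wedgeBlk (J : V → V) (p₁ q₁ p₂ q₂ : ℕ) (f : Blk V p₁ q₁) (g : Blk V p₂ q₂) :
    jTranspose J (wedgeBlk V p₁ q₁ p₂ q₂ f g)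
      = wedgeBlk V q₁ p₁ q₂ p₂ (jTranspose J f) (jTranspose J g) := by
  funext x y
  simp only [jTranspose, wedgeBlk]
  rw [Finset.sum_comm, show q₁.factorial * q₂.factorial * p₁.factorial * p₂.factorial
    = p₁.factorial * p₂.factorial * q₁.factorial * q₂.factorial by ring]
  congr 1
  refine Finset.sum_congr rfl fun σ _ => Finset.sum_congr rfl fun τ _ => ?_
  ring

theorem jTranspose_powBlk (J : V → V) {ω : Blk V 1 1} (hω : jTranspose J ω = ω) (k : ℕ) :
    jTranspose J (powBlk ω k) = powBlk ω k := by
  induction k with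
  | zero => rfl
  | succ k ih =>
    funext x y
    have h := congrFun (congrFun (jTranspose_wedgeBlk J 1 1 k k ω (powBlk ω k))
      (fun i => x (Fin.cast (by omega) i))) (fun j => y (Fin.cast (by omega) j))
    rwa [hω, ih] at h

theorem WeakPos.jTranspose (J : V → V) {k : ℕ} {F : Blk V k k} (hF : WeakPos k F) :
    WeakPos k (jTranspose J F) :=
  fun x => hF fun i => J (x i)

theorem WeakPos.midpoint {k : ℕ} {F G : Blk V k k} (hF : WeakPos k F) (hG : WeakPos k G) :
    WeakPos k (fun x y => (F x y + G x y) / 2) := by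
  intro x
  obtain ⟨hF_re, hF_im⟩ := hF x
  obtain ⟨hG_re, hG_im⟩ := hG x
  have hsplit : Complex.I ^ k * ((F x x + G x x) / 2)
      = (Complex.I ^ k * F x x + Complex.I ^ k * G x x) / (2 : ℝ) := by
    push_cast; ring
  rw [hsplit, Complex.div_ofReal_re, Complex.div_ofReal_im, Complex.add_re, Complex.add_im,
    hF_im, hG_im]
  exact ⟨by positivity, by norm_num⟩

end JTranspose

theorem wedgeBlk_midpoint_left {V : Type*} {p₁ q₁ p₂ q₂ : ℕ} (f₁ f₂ : Blk V p₁ q₁)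
    (g : Blk V p₂ q₂) :
    wedgeBlk V p₁ q₁ p₂ q₂ (fun a b => (f₁ a b + f₂ a b) / 2) g
      = fun x y => (wedgeBlk V p₁ q₁ p₂ q₂ f₁ g x y + wedgeBlk V p₁ q₁ p₂ q₂ f₂ g x y) / 2 := by
  funext x y
  simp only [wedgeBlk, ← mul_add, ← Finset.sum_add_distrib, mul_div_assoc, Finset.sum_div]
  congr 1
  refine Finset.sum_congr rfl fun σ _ => Finset.sum_congr rfl fun τ _ => ?_
  ring

namespace OmegaQPos

variable {V : Type*} {ω : Blk V 1 1} {q : ℕ} {η : V → V → ℂ}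

theorem neg_Jact (J : V → V) (hω : jTranspose J ω = ω) (hη : OmegaQPos ω q η) :
    OmegaQPos ω q (fun x y => -Jact J η x y) := by
  have hblock : jTranspose J (fun a b : Fin 1 → V => η (a 0) (b 0))
      = fun a b => -Jact J η (a 0) (b 0) := by
    funext a b
    simp only [jTranspose, Jact, neg_neg]
  have h := hη.jTranspose J
  rwa [jTranspose_wedgeBlk, jTranspose_powBlk J hω, hblock] at h

theorem midpoint {η₁ η₂ : V → V → ℂ} (h₁ : OmegaQPos ω q η₁) (h₂ : OmegaQPos ω q η₂) :
    OmegaQPos ω q (fun x y => (η₁ x y + η₂ x y) / 2) := by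
  unfold OmegaQPos
  rw [wedgeBlk_midpoint_left]
  exact WeakPos.midpoint h₁ h₂

end OmegaQPos

theorem neg_Jact_apply_of_sesq {V : Type*} [AddCommGroup V] [Module ℂ V] {J : V → V}
    (hJJ : ∀ x, J (J x) = -x) {η : V → V → ℂ}
    (hη1 : ∀ (c : ℂ) x x' y, η (c • x + x') y = c * η x y + η x' y)
    (hη2 : ∀ (c : ℂ) y y' x, η x (c • y + y') = (starRingEnd ℂ) c * η x y + η x y')
    (x y : V) :
    -Jact J η (J x) (J y) = η y x := by
  have hzero_left : ∀ y, η 0 y = 0 := fun y => by simpa using hη1 1 0 0 y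
  have hzero_right : ∀ x, η x 0 = 0 := fun x => by simpa using hη2 1 0 0 x
  have hneg_left : ∀ x y, η (-x) y = -η x y := fun x y => by
    simpa [hzero_left] using hη1 (-1) x 0 y
  have hneg_right : ∀ x y, η x (-y) = -η x y := fun x y => by
    simpa [hzero_right] using hη2 (-1) y 0 x
  calc -Jact J η (J x) (J y) = η (-y) (-x) := by simp only [Jact, neg_neg, hJJ]
    _ = η y x := by rw [hneg_left, hneg_right, neg_neg]

theorem apply_swap_of_diagonal {ι R : Type*} [DecidableEq ι] [Zero R] {M : ι → ι → R}
    {d : ι → R}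
    (hM : ∀ i j, M i j = if i = j then d i else 0) (i j : ι) :
    M j i = if i = j then d i else 0 := by
  rw [hM]
  by_cases hij : i = j
  · subst hij; simp
  · simp [hij, Ne.symm hij]

theorem minus_J_eta_same_eigenvalues_general
    (V : Type*) [AddCommGroup V] [Module ℂ V]
    (J : V → V)
    (hJJ : ∀ x, J (J x) = -x)
    (h : V → V → ℂ)
    (hJinv : ∀ x y, h (J x) (J y) = h y x)
    (η : V → V → ℂ)
    (hη1 : ∀ (c : ℂ) x x' y, η (c • x + x') y = c * η x y + η x' y)
    (hη2 : ∀ (c : ℂ) y y' x, η x (c • y + y') = (starRingEnd ℂ) c * η x y + η x y')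
    (q : ℕ) :
    let ω : Blk V 1 1 := fun x y => -Complex.I * h (x 0) (y 0)
    -- (a) -J(η) has the same eigenvalues as η:
    (∀ (N : ℕ) (e : Fin N → V) (α : Fin N → ℝ),
      ((∀ i j, h (e i) (e j) = if i = j then 1 else 0) ∧
       (∀ i j, η (e i) (e j) = if i = j then -Complex.I * (α i : ℂ) else 0)) →
      ((∀ i j, h (J (e i)) (J (e j)) = if i = j then 1 else 0) ∧
       (∀ i j, (-Jact J η (J (e i)) (J (e j)))
          = if i = j then -Complex.I * (α i : ℂ) else 0))
    ∧
    -- (b) ω^q-positivity is inherited by -J(η) and by η' = ½(η - J(η)):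
    (OmegaQPos ω q η →
      OmegaQPos ω q (fun x y => -Jact J η x y)
      ∧ OmegaQPos ω q (fun x y => (η x y - Jact J η x y) / 2))) := by
  intro ω
  have hω : jTranspose J ω = ω := by
    funext x y
    simp only [ω, jTranspose, hJinv]
  intro N e α ⟨he, hd⟩
  refine ⟨⟨fun i j => ?_, fun i j => ?_⟩, fun hη => ?_⟩
  · rw [hJinv]
    exact apply_swap_of_diagonal (M := fun i j => h (e i) (e j)) he i j
  · rw [neg_Jact_apply_of_sesq hJJ hη1 hη2]
    exact apply_swap_of_diagonal (M := fun i j => η (e i) (e j)) hd i j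
  · have hJη := hη.neg_Jact J hω
    refine ⟨hJη, ?_⟩
    simpa only [sub_eq_add_neg] using hη.midpoint hJη

theorem minus_J_eta_same_eigenvalues
    (V : Type*) [AddCommGroup V] [Module ℂ V] [FiniteDimensional ℂ V]
    (J : V → V)
    (hJadd : ∀ x y, J (x + y) = J x + J y)
    (hJsmul : ∀ (c : ℂ) x, J (c • x) = (starRingEnd ℂ) c • J x)
    (hJJ : ∀ x, J (J x) = -x)
    (h : V → V → ℂ)
    (hherm : ∀ x y, (starRingEnd ℂ) (h x y) = h y x)
    (hlin : ∀ (c : ℂ) x x' y, h (c • x + x') y = c * h x y + h x' y)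
    (hposdef : ∀ x : V, x ≠ 0 → 0 < (h x x).re)
    (hJinv : ∀ x y, h (J x) (J y) = h y x)
    (η : V → V → ℂ)
    (hη1 : ∀ (c : ℂ) x x' y, η (c • x + x') y = c * η x y + η x' y)
    (hη2 : ∀ (c : ℂ) y y' x, η x (c • y + y') = (starRingEnd ℂ) c * η x y + η x y')
    (hηreal : ∀ x y, (starRingEnd ℂ) (η x y) = -η y x)
    (q : ℕ) (hq : 1 ≤ q) :
    let ω : Blk V 1 1 := fun x y => -Complex.I * h (x 0) (y 0)
    -- (a) -J(η) has the same eigenvalues as η: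
    (∀ (N : ℕ) (e : Fin N → V) (α : Fin N → ℝ),
      ((∀ i j, h (e i) (e j) = if i = j then 1 else 0) ∧
       (∀ i j, η (e i) (e j) = if i = j then -Complex.I * (α i : ℂ) else 0)) →
      ((∀ i j, h (J (e i)) (J (e j)) = if i = j then 1 else 0) ∧
       (∀ i j, (-Jact J η (J (e i)) (J (e j)))
          = if i = j then -Complex.I * (α i : ℂ) else 0))
    ∧
    -- (b) ω^q-positivity is inherited by -J(η) and by η' = ½(η - J(η)):
    (OmegaQPos ω q η →
      OmegaQPos ω q (fun x y => -Jact J η x y)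
      ∧ OmegaQPos ω q (fun x y => (η x y - Jact J η x y) / 2))) :=
  minus_J_eta_same_eigenvalues_general V J hJJ h hJinv η hη1 hη2 q

end
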